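/- arXiv:1512.04647 — 2 statements merged into one kernel-verified Lean document; each statement's English description precedes it below -/
import Mathlib

section
/- With R, (ν_k) as above and hypernaturals α, β with β ≫ α: the ideal Q = I_α + P_β (where P_β is the unique maximal ideal containing I_β and disjoint from M_β) is disjoint from M_α, hence contained in P_α. -/
open Filter

/-- The hypernatural numbers: germs of sequences of natural numbers. -/
def Hypernat (U : Ultrafilter ℕ) : Set (Germ (U : Filter ℕ) ℝ) :=
  {x | ∃ f : ℕ → ℕ, x = (↑(fun k => (f k : ℝ)) : Germ (U : Filter ℕ) ℝ)}

/-- `β ≫ α` : `c·α < β` for every positive standard real `c`. -/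
def MuchGreater (U : Ultrafilter ℕ) (β α : Germ (U : Filter ℕ) ℝ) : Prop :=
  ∀ c : ℝ, 0 < c → ((c : ℝ) : Germ (U : Filter ℕ) ℝ) * α < β

/-- `ν` is a sequence of (rank-one) valuations on the commutative ring `R`:
`ν k (a+b) ≥ min (ν k a) (ν k b)`, `ν k (ab) = ν k a + ν k b`, `ν k a = ∞ ↔ a = 0`,
and `ν k 1 = 0`. -/
def IsValSeq {R : Type*} [CommRing R] (ν : ℕ → R → ENNReal) : Prop :=
  ∀ k : ℕ, (∀ a b : R, min (ν k a) (ν k b) ≤ ν k (a + b)) ∧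
    (∀ a b : R, ν k (a * b) = ν k a + ν k b) ∧
    (∀ a : R, ν k a = ⊤ ↔ a = 0) ∧ ν k 1 = 0

/-- `[ν_k(a)]` : the hyperreal class of the sequence `(ν k a)` (via `ENNReal.toReal`). -/
noncomputable def vGerm (U : Ultrafilter ℕ) {R : Type*} [CommRing R]
    (ν : ℕ → R → ENNReal) (a : R) : Germ (U : Filter ℕ) ℝ :=
  ↑(fun k => (ν k a).toReal)

/-- `I_α = {a : [ν_k(a)] ≫ α}` (with `0 ∈ I_α` by convention). -/
noncomputable def Igg (U : Ultrafilter ℕ) {R : Type*} [CommRing R]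
    (ν : ℕ → R → ENNReal) (α : Germ (U : Filter ℕ) ℝ) : Set R :=
  {a | a = 0 ∨ MuchGreater U (vGerm U ν a) α}

/-- `M_α = {a ≠ 0 : [ν_k(a)] ≤ n·α for some standard natural n}`. -/
noncomputable def Mle (U : Ultrafilter ℕ) {R : Type*} [CommRing R]
    (ν : ℕ → R → ENNReal) (α : Germ (U : Filter ℕ) ℝ) : Set R :=
  {a | a ≠ 0 ∧ ∃ n : ℕ, vGerm U ν a ≤ (n : Germ (U : Filter ℕ) ℝ) * α}

/-- `P` is a maximal element of the family `𝒥_γ` of ideals containing `I_γ` and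
disjoint from `M_γ`. -/
def IsMaxJ (U : Ultrafilter ℕ) {R : Type*} [CommRing R]
    (ν : ℕ → R → ENNReal) (γ : Germ (U : Filter ℕ) ℝ) (P : Ideal R) : Prop :=
  Igg U ν γ ⊆ (P : Set R) ∧ Disjoint (P : Set R) (Mle U ν γ) ∧
    ∀ Q : Ideal R, Igg U ν γ ⊆ (Q : Set R) → Disjoint (Q : Set R) (Mle U ν γ) →
      P ≤ Q → Q = P

section Aux
variable (U : Ultrafilter ℕ) {R : Type*} [CommRing R] (ν : ℕ → R → ENNReal)

lemma vGerm_ne_top (hν : IsValSeq ν) {a : R} (ha : a ≠ 0) (k : ℕ) : ν k a ≠ ⊤ :=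
  fun h => ha (((hν k).2.2.1 a).1 h)

lemma pt_min (hν : IsValSeq ν) {y z : R} (ha : y + z ≠ 0) (k : ℕ) :
    min ((ν k y).toReal) ((ν k z).toReal) ≤ (ν k (y + z)).toReal := by
  have hmin := (hν k).1 y z
  have hane : ν k (y+z) ≠ ⊤ := vGerm_ne_top ν hν ha k
  by_cases hy : ν k y = ⊤
  · exact min_le_of_left_le (by simp [hy])
  by_cases hz : ν k z = ⊤
  · exact min_le_of_right_le (by simp [hz])
  · rw [← ENNReal.toReal_min hy hz]
    exact ENNReal.toReal_mono hane hmin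

lemma germ_min (hν : IsValSeq ν) {y z : R} (ha : y + z ≠ 0) :
    vGerm U ν y ≤ vGerm U ν (y + z) ∨ vGerm U ν z ≤ vGerm U ν (y + z) := by
  by_contra h
  push_neg at h
  obtain ⟨h1, h2⟩ := h
  rw [vGerm, vGerm, Germ.coe_lt] at h1 h2
  obtain ⟨k, hk1, hk2⟩ := (h1.and h2).exists
  rcases min_le_iff.1 (pt_min ν hν ha k) with h | h
  · exact absurd h (not_le.2 hk1)
  · exact absurd h (not_le.2 hk2)

lemma sup_disj (hν : IsValSeq ν) (γ : Germ (U : Filter ℕ) ℝ) (A B : Ideal R)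
    (hA : Disjoint (A : Set R) (Mle U ν γ)) (hB : Disjoint (B : Set R) (Mle U ν γ)) :
    Disjoint ((A ⊔ B : Ideal R) : Set R) (Mle U ν γ) := by
  rw [Set.disjoint_left]
  intro a haQ haM
  obtain ⟨y, hy, z, hz, rfl⟩ := Submodule.mem_sup.1 haQ
  obtain ⟨hane, n, hn⟩ := haM
  rcases germ_min U ν hν hane with h | h
  · rcases eq_or_ne y 0 with rfl | hy0
    · rw [zero_add] at hane hn
      exact Set.disjoint_left.1 hB hz ⟨hane, n, hn⟩
    · exact Set.disjoint_left.1 hA hy ⟨hy0, n, h.trans hn⟩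
  · rcases eq_or_ne z 0 with rfl | hz0
    · rw [add_zero] at hane hn
      exact Set.disjoint_left.1 hA hy ⟨hane, n, hn⟩
    · exact Set.disjoint_left.1 hB hz ⟨hz0, n, h.trans hn⟩

end Aux

/-- For hypernaturals `β ≫ α`, the ideal `Q = I_α + P_β` is disjoint from `M_α`, and
hence contained in `P_α`. -/
theorem Ialpha_sup_Pbeta_disjoint_Malpha (U : Ultrafilter ℕ)
    (hU : Filter.cofinite ≤ (U : Filter ℕ))
    {R : Type*} [CommRing R] (ν : ℕ → R → ENNReal) (hν : IsValSeq ν)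
    (α β : Germ (U : Filter ℕ) ℝ) (hα : α ∈ Hypernat U) (hαpos : 0 < α)
    (hβ : β ∈ Hypernat U) (hβα : MuchGreater U β α)
    (Jα : Ideal R) (hJα : (Jα : Set R) = Igg U ν α)
    (Pα : Ideal R) (hPα : IsMaxJ U ν α Pα)
    (Pβ : Ideal R) (hPβ : IsMaxJ U ν β Pβ) :
    Disjoint ((Jα ⊔ Pβ : Ideal R) : Set R) (Mle U ν α) ∧ Jα ⊔ Pβ ≤ Pα := by
  have castn : ∀ n : ℕ, ((n : ℕ) : Germ (U : Filter ℕ) ℝ) = ((n:ℝ) : Germ (U : Filter ℕ) ℝ) := by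
    intro n; push_cast; ring
  have hJdisj : Disjoint (Jα : Set R) (Mle U ν α) := by
    rw [Set.disjoint_left, hJα]
    rintro a (rfl | hgg) ⟨hane, n, hn⟩
    · exact hane rfl
    · have h1 := hgg ((n+1 : ℕ) : ℝ) (by positivity)
      rw [← castn (n+1)] at h1
      have h2 : ((n:ℕ) : Germ (U : Filter ℕ) ℝ) * α ≤ ((n+1:ℕ) : Germ (U : Filter ℕ) ℝ) * α := by
        apply mul_le_mul_of_nonneg_right _ hαpos.le
        exact_mod_cast Nat.cast_le.2 (Nat.le_succ n)
      exact absurd (lt_of_le_of_lt (hn.trans h2) h1) (lt_irrefl _)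
  have hβpos : 0 < β := by
    have h := hβα 1 one_pos
    rw [show ((1:ℝ) : Germ (U : Filter ℕ) ℝ) = 1 by norm_cast, one_mul] at h
    exact hαpos.trans h
  have hPdisj : Disjoint (Pβ : Set R) (Mle U ν α) := by
    rw [Set.disjoint_left]
    rintro a haP ⟨hane, n, hn⟩
    have hmem : a ∈ Mle U ν β := by
      refine ⟨hane, 1, ?_⟩
      rw [show ((1:ℕ) : Germ (U : Filter ℕ) ℝ) = 1 by norm_cast, one_mul]
      rcases Nat.eq_zero_or_pos n with rfl | hnpos
      · simp only [Nat.cast_zero, zero_mul] at hn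
        exact hn.trans hβpos.le
      · have h := hβα (n : ℝ) (by exact_mod_cast hnpos)
        rw [← castn n] at h
        exact hn.trans h.le
    exact Set.disjoint_left.1 hPβ.2.1 haP hmem
  have part1 := sup_disj U ν hν α Jα Pβ hJdisj hPdisj
  refine ⟨part1, ?_⟩
  have hdisj2 := sup_disj U ν hν α (Jα ⊔ Pβ) Pα part1 hPα.2.1
  have hsub : Igg U ν α ⊆ ((Jα ⊔ Pβ ⊔ Pα : Ideal R) : Set R) := by
    rw [← hJα]
    intro x hx
    exact Ideal.mem_sup_left (Ideal.mem_sup_left hx)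
  have heq := hPα.2.2 (Jα ⊔ Pβ ⊔ Pα) hsub hdisj2 le_sup_right
  calc Jα ⊔ Pβ ≤ Jα ⊔ Pβ ⊔ Pα := le_sup_left
  _ = Pα := heq
end

section
/- Call a commutative unital ring R ample if there is a sequence of valuations ν_k on R such that for every hypernatural β there exists a_β ∈ R with [ν_k(a_β)] = β. If R is ample and α, β are hypernaturals with β ≫ α, then P_β ⊊ P_α, i.e., the inclusion of the associated prime ideals is proper; indeed a_α ∈ P_α \ P_β. -/
open Filter

/-- `R` is ample: for every hypernatural `β` there is `a ∈ R` with `[ν_k(a)] = β`. -/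
def IsAmple (U : Ultrafilter ℕ) {R : Type*} [CommRing R] (ν : ℕ → R → ENNReal) : Prop :=
  ∀ β ∈ Hypernat U, ∃ a : R, vGerm U ν a = β

/-- `vGerm` of `0` is `0`. -/
lemma vGerm_zero (U : Ultrafilter ℕ) {R : Type*} [CommRing R]
    (ν : ℕ → R → ENNReal) (hν : IsValSeq ν) : vGerm U ν (0 : R) = 0 := by
  have : (fun k => (ν k (0 : R)).toReal) = fun _ => (0 : ℝ) := by
    funext k
    rw [(hν k).2.2.1 0 |>.mpr rfl]
    simp
  simp [vGerm, this]
  rfl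

/-- The nat cast into germs agrees with the real-constant cast. -/
lemma natCast_germ_eq (U : Ultrafilter ℕ) (n : ℕ) :
    ((n : Germ (U : Filter ℕ) ℝ)) = (((n : ℝ)) : Germ (U : Filter ℕ) ℝ) := by
  rfl

/-- Key ultrametric estimate: if `x = p + q` with all three nonzero and
`[ν(x)] < [ν(q)]`, then `[ν(p)] ≤ [ν(x)]`. -/
lemma vGerm_le_of_add (U : Ultrafilter ℕ) {R : Type*} [CommRing R]
    (ν : ℕ → R → ENNReal) (hν : IsValSeq ν) {x p q : R}
    (hx : x = p + q) (hp : p ≠ 0) (hq : q ≠ 0) (hx0 : x ≠ 0)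
    (hlt : vGerm U ν x < vGerm U ν q) : vGerm U ν p ≤ vGerm U ν x := by
  have hev : ∀ᶠ k in (U : Filter ℕ), (ν k x).toReal < (ν k q).toReal :=
    Filter.Germ.coe_lt.1 hlt
  refine Filter.Germ.coe_le.2 ?_
  filter_upwards [hev] with k hk
  have hpt : ν k p ≠ ⊤ := fun h => hp (((hν k).2.2.1 p).1 h)
  have hqt : ν k q ≠ ⊤ := fun h => hq (((hν k).2.2.1 q).1 h)
  have hxt : ν k x ≠ ⊤ := fun h => hx0 (((hν k).2.2.1 x).1 h)
  have hmin : min (ν k p) (ν k q) ≤ ν k x := hx ▸ (hν k).1 p q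
  have hxq : ν k x < ν k q := (ENNReal.toReal_lt_toReal hxt hqt).1 hk
  have hple : ν k p ≤ ν k x := by
    rcases min_cases (ν k p) (ν k q) with ⟨h1, _⟩ | ⟨h1, h2⟩
    · exact h1 ▸ hmin
    · exact absurd (h1 ▸ hmin) (not_le.2 hxq)
  exact ENNReal.toReal_le_toReal hpt hxt |>.2 hple

/-- If `R` is ample and `β ≫ α` are hypernaturals, then `P_β ⊊ P_α`; indeed any
witness `a` with `[ν_k(a)] = β` lies in `P_α \ P_β`. -/
theorem Pbeta_lt_Palpha_of_ample (U : Ultrafilter ℕ)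
    (hU : Filter.cofinite ≤ (U : Filter ℕ))
    {R : Type*} [CommRing R] (ν : ℕ → R → ENNReal) (hν : IsValSeq ν)
    (hamp : IsAmple U ν)
    (α β : Germ (U : Filter ℕ) ℝ) (hα : α ∈ Hypernat U) (hαpos : 0 < α)
    (hβ : β ∈ Hypernat U) (hβα : MuchGreater U β α)
    (Pα : Ideal R) (hPα : IsMaxJ U ν α Pα)
    (Pβ : Ideal R) (hPβ : IsMaxJ U ν β Pβ) :
    Pβ < Pα ∧ ∀ a : R, vGerm U ν a = β → a ∈ Pα ∧ a ∉ Pβ := by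
  have hβpos : 0 < β := by
    have h1 := hβα 1 one_pos
    rw [show (((1 : ℝ)) : Germ (U : Filter ℕ) ℝ) = 1 from rfl, one_mul] at h1
    exact hαpos.trans h1
  -- the witness claim
  have hwit : ∀ a : R, vGerm U ν a = β → a ∈ Pα ∧ a ∉ Pβ := by
    intro a ha
    have ha0 : a ≠ 0 := by
      rintro rfl
      rw [vGerm_zero U ν hν] at ha
      exact absurd ha.symm (ne_of_gt hβpos)
    constructor
    · exact hPα.1 (Or.inr (ha ▸ hβα))
    · intro haPβ
      have haM : a ∈ Mle U ν β := by
        refine ⟨ha0, 1, ?_⟩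
        rw [ha, natCast_germ_eq, show (((1 : ℕ) : ℝ) : Germ (U : Filter ℕ) ℝ) = 1 by norm_num; rfl, one_mul]
      exact Set.disjoint_left.1 hPβ.2.1 haPβ haM
  -- P_β ≤ P_α
  have hle : Pβ ≤ Pα := by
    have hdisj : Disjoint ((Pα ⊔ Pβ : Ideal R) : Set R) (Mle U ν α) := by
      rw [Set.disjoint_left]
      rintro x hxQ ⟨hx0, n, hxn⟩
      obtain ⟨p, hpPα, q, hqPβ, hpq⟩ := Submodule.mem_sup.1 hxQ
      rw [natCast_germ_eq] at hxn
      -- vGerm x < β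
      have hxβ : vGerm U ν x < β := by
        have hna : (((n : ℝ)) : Germ (U : Filter ℕ) ℝ) * α
            < (((n + 1 : ℝ)) : Germ (U : Filter ℕ) ℝ) * α := by
          apply mul_lt_mul_of_pos_right _ hαpos
          exact Filter.Germ.const_lt (by norm_num)
        exact lt_of_le_of_lt hxn (hna.trans (hβα (n + 1) (by positivity)))
      by_cases hq0 : q = 0
      · subst hq0
        rw [add_zero] at hpq
        exact Set.disjoint_left.1 hPα.2.1 (hpq ▸ hpPα) ⟨hx0, n, by
          rw [natCast_germ_eq]; exact hxn⟩
      · -- q ∉ M_β, so vGerm q > β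
        have hqM : q ∉ Mle U ν β := fun h => Set.disjoint_left.1 hPβ.2.1 hqPβ h
        have hqβ : β < vGerm U ν q := by
          by_contra h
          push_neg at h
          exact hqM ⟨hq0, 1, by rw [natCast_germ_eq, show (((1 : ℕ) : ℝ) : Germ (U : Filter ℕ) ℝ) = 1 by norm_num; rfl, one_mul]; exact h⟩
        have hxq : vGerm U ν x < vGerm U ν q := hxβ.trans hqβ
        by_cases hp0 : p = 0
        · subst hp0
          rw [zero_add] at hpq
          subst hpq
          exact absurd hxq (lt_irrefl _)
        · have hple : vGerm U ν p ≤ vGerm U ν x :=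
            vGerm_le_of_add U ν hν hpq.symm hp0 hq0 hx0 hxq
          have hpM : p ∈ Mle U ν α := ⟨hp0, n, by
            rw [natCast_germ_eq]; exact hple.trans hxn⟩
          exact Set.disjoint_left.1 hPα.2.1 hpPα hpM
    have hQ : (Pα ⊔ Pβ : Ideal R) = Pα :=
      hPα.2.2 _ (hPα.1.trans (SetLike.coe_subset_coe.2 le_sup_left))
        hdisj le_sup_left
    exact le_sup_right.trans hQ.le
  obtain ⟨a, ha⟩ := hamp β hβ
  obtain ⟨haPα, haPβ⟩ := hwit a ha
  exact ⟨lt_of_le_of_ne hle (fun h => haPβ (h ▸ haPα)), hwit⟩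
end
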